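/- arXiv:1712.01957 — 4 statements merged into one kernel-verified Lean document; each statement's English description precedes it below -/
import Mathlib

section
/- The map assigning to each permutation σ ∈ Sym((underline m) × (underline n) × (underline o)) its reduced matrix is a surjection onto M(mo, n, no, m). In particular, every (m·o)×(n·o) matrix over ℕ with all row sums n and all column sums m is the reduced matrix of some permutation of m×n×o. -/
/-- The reduced matrix of a permutation of `m × n × o`. -/
def reducedMatrix {m n o : ℕ} (σ : Equiv.Perm (Fin m × Fin n × Fin o)) :
    Matrix (Fin m × Fin o) (Fin n × Fin o) ℕ := fun ik jk =>
  (Finset.univ.filter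
    (fun p : Fin m × Fin n => σ (p.1, jk.1, jk.2) = (ik.1, p.2, ik.2))).card

/-!
Since column `(j', k')` of `A` sums to `m`, the first coordinates `i'` of the triples
`(i', j', k')` can be distributed over the rows `(i, k)` with exactly `A (i, k) (j', k')` of
them landing in row `(i, k)`. Since every row sums to `n`, each row then receives exactly `n`
triples in total, which are numbered by `j ∈ Fin n`; sending a triple to `(i, j, k)` is a
permutation whose reduced matrix is `A`.
-/

open Finset

theorem Fintype.exists_card_fiber_eq {α ι : Type*} [Fintype α] [Fintype ι] [DecidableEq ι]
    (c : ι → ℕ) (hc : ∑ i, c i = Fintype.card α) :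
    ∃ f : α → ι, ∀ i, #{a | f a = i} = c i := by
  obtain ⟨e⟩ : Nonempty (α ≃ Σ i, Fin (c i)) :=
    Fintype.card_eq.mp (by simp [hc])
  refine ⟨fun a => (e a).1, fun i => ?_⟩
  rw [← Fintype.card_subtype, ← Fintype.card_fin (c i),
    ← Fintype.card_congr (Equiv.sigmaSubtype (β := fun i => Fin (c i)) i)]
  exact Fintype.card_congr (e.subtypeEquiv fun _ => Iff.rfl)

theorem Fintype.exists_equiv_prod_fst_eq {α β : Type*} [Fintype α] [DecidableEq β]
    (G : α → β) {n : ℕ} (hG : ∀ b, #{a | G a = b} = n) :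
    ∃ e : α ≃ β × Fin n, ∀ a, (e a).1 = G a := by
  have hfib (b : β) : Nonempty ({a // G a = b} ≃ Fin n) := by
    rw [← Fintype.card_eq, Fintype.card_subtype, hG, Fintype.card_fin]
  exact ⟨(Equiv.sigmaFiberEquiv G).symm.trans
    (Equiv.sigmaEquivProdOfEquiv fun b => (hfib b).some), fun _ => rfl⟩

theorem card_filter_prod_eq_sum_card_filter {α β γ : Type*} [Fintype α] [Fintype β]
    [DecidableEq γ] (g : β → α → γ) (c : γ) :
    #{x : α × β | g x.2 x.1 = c} = ∑ b, #{a | g b a = c} := by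
  simp only [card_filter, Fintype.sum_prod_type_right]

theorem reducedMatrix_apply {m n o : ℕ} (σ : Equiv.Perm (Fin m × Fin n × Fin o))
    (ik : Fin m × Fin o) (jk : Fin n × Fin o) :
    reducedMatrix σ ik jk =
      #{i | ((σ (i, jk.1, jk.2)).1, (σ (i, jk.1, jk.2)).2.2) = ik} := by
  refine card_bij' (fun p _ => p.1) (fun i _ => (i, (σ (i, jk.1, jk.2)).2.1))
    ?_ ?_ ?_ fun _ _ => rfl
  · intro p hp
    simp_all
  · intro i hi
    simp only [mem_filter, mem_univ, true_and] at hi ⊢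
    subst hi
    rfl
  · intro p hp
    simp_all

theorem stmt_3 (m n o : ℕ) (A : Matrix (Fin m × Fin o) (Fin n × Fin o) ℕ)
    (hrow : ∀ ik, ∑ jk, A ik jk = n) (hcol : ∀ jk, ∑ ik, A ik jk = m) :
    ∃ σ : Equiv.Perm (Fin m × Fin n × Fin o), reducedMatrix σ = A := by
  choose g hg using fun jk => Fintype.exists_card_fiber_eq (A · jk)
    ((hcol jk).trans (Fintype.card_fin m).symm)
  obtain ⟨e, he⟩ := Fintype.exists_equiv_prod_fst_eq (fun x : Fin m × Fin n × Fin o => g x.2 x.1)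
    (n := n) fun ik => by
      rw [card_filter_prod_eq_sum_card_filter g ik]
      exact (sum_congr rfl fun jk _ => hg jk ik).trans (hrow ik)
  let σ : Equiv.Perm (Fin m × Fin n × Fin o) :=
    e.trans ((Equiv.prodAssoc _ _ _).trans (Equiv.prodCongr (Equiv.refl _) (Equiv.prodComm _ _)))
  have hσ (x) : ((σ x).1, (σ x).2.2) = g x.2 x.1 := he x
  refine ⟨σ, Matrix.ext fun ik jk => ?_⟩
  simp only [reducedMatrix_apply, hσ]
  exact hg jk ik
end

section
/- Let σ, π ∈ Sym((underline m) × (underline n) × (underline o)) with reduced matrices A and B respectively. Then σ and π lie in the same double coset of (Sym(m×o) wreath-acting-with Sym(n)) \ Sym(m×n×o) / (Sym(m) wreath Sym(n×o)) if and only if there exist permutations ρ₁ ∈ Sym(m×o) and ρ₂ ∈ Sym(n×o) with ρ₁ A ρ₂ = B (as permutation matrices acting on the reduced matrices). -/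
/-!
Write `dropMiddle (i, j, k) = (i, k)`. The entry of the reduced matrix of `σ` at `(ik, jk)` is
the size of the fibre over `ik` of `i ↦ dropMiddle (σ (i, jk))`. Multiplying on the left by an
element of `Sym(m × o) ⋌ Sym(n)` relabels the rows, and multiplying on the right by an element of
`Sym(m) ≀ Sym(n × o)` relabels the columns and reorders the domain of each of these maps, so the
reduced matrix is a double coset invariant. Conversely, if the matrices agree up to `ρ₁, ρ₂`, then
for every column the two maps have fibres of equal sizes, hence differ by a permutation `u jk` of
`Fin m`; these and `ρ₂` form `g`, and `h = π g⁻¹ σ⁻¹` preserves `dropMiddle` up to `ρ₁⁻¹`, which is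
exactly membership in `Sym(m × o) ⋌ Sym(n)`.
-/

open Finset Equiv

def dropMiddle {α β γ : Type*} (x : α × β × γ) : α × γ := (x.1, x.2.2)

@[simp] lemma dropMiddle_mk {α β γ : Type*} (a : α) (b : β) (c : γ) :
    dropMiddle (a, b, c) = (a, c) := rfl

lemma exists_perm_comp_eq_of_card_fiber_eq {α β : Type*} [Fintype α] [DecidableEq β]
    (f g : α → β) (h : ∀ b, #{a | f a = b} = #{a | g a = b}) :
    ∃ e : Perm α, ∀ a, f (e a) = g a := by
  have e : ∀ b, {a // g a = b} ≃ {a // f a = b} := fun b =>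
    Fintype.equivOfCardEq (by simp only [Fintype.card_subtype, h])
  exact ⟨ofFiberEquiv e, ofFiberEquiv_map e⟩

lemma exists_fiberwise_perm_iff {α β γ : Type*} [Finite β] (h : Perm (α × β × γ))
    (h₁ : Perm (α × γ)) :
    (∃ h₂ : α × γ → Perm β, ∀ i j k, h (i, j, k) = ((h₁ (i, k)).1, h₂ (i, k) j, (h₁ (i, k)).2)) ↔
      ∀ x, dropMiddle (h x) = h₁ (dropMiddle x) := by
  constructor
  · rintro ⟨h₂, hh⟩ ⟨i, j, k⟩
    simp [hh]
  · intro hh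
    have outer (i j k) : (h (i, j, k)).1 = (h₁ (i, k)).1 ∧ (h (i, j, k)).2.2 = (h₁ (i, k)).2 :=
      Prod.ext_iff.1 (hh (i, j, k))
    have hinj (ik : α × γ) : Function.Injective fun j => (h (ik.1, j, ik.2)).2.1 := by
      intro j j' hjj'
      have : h (ik.1, j, ik.2) = h (ik.1, j', ik.2) := by
        ext
        · rw [(outer _ _ _).1, (outer _ _ _).1]
        · exact hjj'
        · rw [(outer _ _ _).2, (outer _ _ _).2]
      simpa using h.injective this
    refine ⟨fun ik => ofBijective _ (Finite.injective_iff_bijective.1 (hinj ik)), fun i j k => ?_⟩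
    ext
    · exact (outer i j k).1
    · rfl
    · exact (outer i j k).2

section ReducedMatrix

variable {m n o : ℕ}

lemma reducedMatrix_eq_card_fiber (σ : Perm (Fin m × Fin n × Fin o)) (ik : Fin m × Fin o)
    (jk : Fin n × Fin o) :
    reducedMatrix σ ik jk = #{i | dropMiddle (σ (i, jk)) = ik} := by
  refine card_nbij' Prod.fst (fun i => (i, (σ (i, jk)).2.1)) ?_ ?_ ?_ fun _ _ => rfl <;>
    intro x hx <;> simp only [coe_filter, mem_univ, true_and, Set.mem_ofPred_eq] at hx ⊢
  · simp [hx]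
  · simp [← hx, dropMiddle]
  · simp [hx]

lemma reducedMatrix_mul_left (σ h : Perm (Fin m × Fin n × Fin o)) (h₁ : Perm (Fin m × Fin o))
    (hh : ∀ x, dropMiddle (h x) = h₁ (dropMiddle x)) (ik : Fin m × Fin o) (jk : Fin n × Fin o) :
    reducedMatrix (h * σ) ik jk = reducedMatrix σ (h₁.symm ik) jk := by
  simp only [reducedMatrix_eq_card_fiber, Perm.mul_apply, hh, ← eq_symm_apply]

lemma reducedMatrix_mul_right (σ g : Perm (Fin m × Fin n × Fin o)) (g₂ : Perm (Fin n × Fin o))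
    (g₁ : Fin n × Fin o → Perm (Fin m)) (hg : ∀ i jk, g (i, jk) = (g₁ jk i, g₂ jk))
    (ik : Fin m × Fin o) (jk : Fin n × Fin o) :
    reducedMatrix (σ * g) ik jk = reducedMatrix σ ik (g₂ jk) := by
  simp only [reducedMatrix_eq_card_fiber]
  exact card_equiv (g₁ jk) (by simp [hg])

lemma exists_perm_dropMiddle_eq_of_reducedMatrix_eq (σ π : Perm (Fin m × Fin n × Fin o))
    (ρ₁ : Perm (Fin m × Fin o)) (ρ₂ : Perm (Fin n × Fin o))
    (H : ∀ ik jk, reducedMatrix σ (ρ₁ ik) (ρ₂ jk) = reducedMatrix π ik jk) (jk : Fin n × Fin o) :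
    ∃ u : Perm (Fin m), ∀ i, dropMiddle (σ (u i, ρ₂ jk)) = ρ₁ (dropMiddle (π (i, jk))) := by
  refine exists_perm_comp_eq_of_card_fiber_eq (fun i => dropMiddle (σ (i, ρ₂ jk)))
    (fun i => ρ₁ (dropMiddle (π (i, jk)))) fun ik => ?_
  simpa only [reducedMatrix_eq_card_fiber, apply_symm_apply, ← eq_symm_apply] using
    H (ρ₁.symm ik) jk

end ReducedMatrix

theorem stmt_5 (m n o : ℕ) (σ π : Equiv.Perm (Fin m × Fin n × Fin o)) :
    (∃ h : Equiv.Perm (Fin m × Fin n × Fin o),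
      (∃ (h₁ : Equiv.Perm (Fin m × Fin o)) (h₂ : Fin m × Fin o → Equiv.Perm (Fin n)),
        ∀ (i : Fin m) (j : Fin n) (k : Fin o),
          h (i, j, k) = ((h₁ (i, k)).1, h₂ (i, k) j, (h₁ (i, k)).2)) ∧
      ∃ g : Equiv.Perm (Fin m × Fin n × Fin o),
        (∃ (g₂ : Equiv.Perm (Fin n × Fin o)) (g₁ : Fin n × Fin o → Equiv.Perm (Fin m)),
          ∀ (i : Fin m) (j : Fin n) (k : Fin o),
            g (i, j, k) = (g₁ (j, k) i, g₂ (j, k))) ∧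
        π = h * σ * g) ↔
    (∃ (ρ₁ : Equiv.Perm (Fin m × Fin o)) (ρ₂ : Equiv.Perm (Fin n × Fin o)),
      ∀ ik jk, reducedMatrix σ (ρ₁ ik) (ρ₂ jk) = reducedMatrix π ik jk) := by
  constructor
  · rintro ⟨h, ⟨h₁, hh⟩, g, ⟨g₂, g₁, hg⟩, rfl⟩
    refine ⟨h₁.symm, g₂, fun ik jk => ?_⟩
    rw [reducedMatrix_mul_right _ g g₂ g₁ (fun i jk => hg i jk.1 jk.2),
      reducedMatrix_mul_left σ h h₁ ((exists_fiberwise_perm_iff h h₁).1 hh)]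
  · rintro ⟨ρ₁, ρ₂, H⟩
    choose u hu using exists_perm_dropMiddle_eq_of_reducedMatrix_eq σ π ρ₁ ρ₂ H
    let g : Perm (Fin m × Fin n × Fin o) :=
      (prodComm _ _).trans ((prodShear ρ₂ u).trans (prodComm _ _))
    have hh : ∀ x, dropMiddle ((π * g⁻¹ * σ⁻¹) x) = ρ₁.symm (dropMiddle x) := by
      intro x
      obtain ⟨⟨i, jk⟩, rfl⟩ := (σ * g).surjective x
      simp only [Perm.mul_apply, Perm.inv_def, symm_apply_apply]
      exact (eq_symm_apply ρ₁).2 (hu jk i).symm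
    exact ⟨π * g⁻¹ * σ⁻¹, ⟨ρ₁.symm, (exists_fiberwise_perm_iff _ _).2 hh⟩,
      g, ⟨ρ₂, u, fun _ _ _ => rfl⟩, by group⟩
end

section
/- Let ρ ∈ Sym(m×n×o) be a permutation lying in the subgroup Sym(m) ≀ Sym(n×o), written in coordinates as ρ(i,j,k) = (ρ₁(i,j,k), ρ₂(j,k)) with ρ₂ ∈ Sym(n×o) and ρ₁(·,j,k) ∈ Sym(m) for each fixed (j,k). Then for any σ ∈ Sym(m×n×o) with reduced matrix A, the reduced matrix of σ∘ρ is A·ρ₂, i.e. the matrix obtained from A by permuting its columns (indexed by n×o) according to ρ₂. -/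
theorem stmt_6 (m n o : ℕ) (σ ρ : Equiv.Perm (Fin m × Fin n × Fin o))
    (ρ₂ : Equiv.Perm (Fin n × Fin o)) (ρ₁ : Fin n × Fin o → Equiv.Perm (Fin m))
    (hρ : ∀ (i : Fin m) (j : Fin n) (k : Fin o), ρ (i, j, k) = (ρ₁ (j, k) i, ρ₂ (j, k))) :
    ∀ ik jk, reducedMatrix (σ * ρ) ik jk = reducedMatrix σ ik (ρ₂ jk) := by
  rintro ik ⟨j, k⟩
  -- Both entries count the same pairs, after relabelling the first coordinate by `ρ₁ (j, k)`.
  refine Finset.card_equiv ((ρ₁ (j, k)).prodCongr (Equiv.refl _)) fun p => ?_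
  simp [hρ]
end

section
/- For every o ≥ 1, the number of congruence classes of matrices in M(2o, 2, 2o, 2) equals p(2o), the number of partitions of 2o. Here two (2o)×(2o) matrices A, B over ℕ are congruent if there exist permutation matrices ρ₁, ρ₂ ∈ Sym(2o) with ρ₁ A ρ₂ = B or ρ₁ Aᵗ ρ₂ = B. -/
/-!
By Hall's theorem a matrix over `ℕ` with all line sums `2` is `P σ + P τ` for two permutation
matrices, and row by row the pair `(σ, τ)` is determined up to a swap; the rows where it is swapped
form a union of cycles of `σ⁻¹ * τ`, on which `σ⁻¹ * τ` gets inverted. So the cycle type of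
`σ⁻¹ * τ`, a partition of the size, is an invariant of the matrix. Permuting rows and columns
conjugates `σ⁻¹ * τ` and transposing inverts it, while two decompositions with conjugate
`σ⁻¹ * τ` are carried into each other by a row and a column permutation. Finally `1 + P g`
realises the cycle type of any `g`.
-/

open Equiv Equiv.Perm Finset Matrix

variable {α : Type*}

def Matrix.Congruent (A B : Matrix α α ℕ) : Prop :=
  ∃ ρ₁ ρ₂ : Perm α, (∀ i j, A (ρ₁ i) (ρ₂ j) = B i j) ∨ (∀ i j, A (ρ₂ j) (ρ₁ i) = B i j)

lemma Matrix.permMatrix_submatrix [DecidableEq α] {R : Type*} [Zero R] [One R]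
    (σ ρ₁ ρ₂ : Perm α) :
    (σ.permMatrix R).submatrix ρ₁ ρ₂ = (ρ₂⁻¹ * σ * ρ₁).permMatrix R := by
  ext i j
  simp [Equiv.eq_symm_apply, eq_comm]

variable [Fintype α]

def Matrix.HasLineSums (M : Matrix α α ℕ) (k : ℕ) : Prop :=
  (∀ i, ∑ j, M i j = k) ∧ ∀ j, ∑ i, M i j = k

namespace Matrix.HasLineSums

variable {M N : Matrix α α ℕ} {k l : ℕ}

lemma add (hM : HasLineSums M k) (hN : HasLineSums N l) : HasLineSums (M + N) (k + l) :=
  ⟨fun i => by simp only [add_apply, sum_add_distrib, hM.1, hN.1],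
    fun j => by simp only [add_apply, sum_add_distrib, hM.2, hN.2]⟩

lemma of_add_right (hMN : HasLineSums (M + N) (k + l)) (hN : HasLineSums N l) :
    HasLineSums M k :=
  ⟨fun i => by have := hMN.1 i; simp only [add_apply, sum_add_distrib, hN.1] at this; omega,
    fun j => by have := hMN.2 j; simp only [add_apply, sum_add_distrib, hN.2] at this; omega⟩

lemma transpose (hM : HasLineSums M k) : HasLineSums Mᵀ k :=
  ⟨hM.2, hM.1⟩

variable [DecidableEq α]

lemma permMatrix (σ : Perm α) : HasLineSums (σ.permMatrix ℕ) 1 := by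
  have hrow : ∀ (τ : Perm α) i, ∑ j, τ.permMatrix ℕ i j = 1 := by simp
  refine ⟨hrow σ, fun j => ?_⟩
  have := hrow σ⁻¹ j
  rwa [← transpose_permMatrix] at this

lemma exists_perm_forall_ne_zero (hM : HasLineSums M k) (hk : k ≠ 0) :
    ∃ σ : Perm α, ∀ i, M i (σ i) ≠ 0 := by
  set t : α → Finset α := fun i => {j | M i j ≠ 0}
  have hall : ∀ s : Finset α, #s ≤ #(s.biUnion t) := by
    intro s
    refine Nat.le_of_mul_le_mul_left ?_ (Nat.pos_of_ne_zero hk)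
    calc k * #s = ∑ i ∈ s, ∑ j ∈ s.biUnion t, M i j := by
          rw [mul_comm, ← smul_eq_mul, ← sum_const]
          refine sum_congr rfl fun i hi => (hM.1 i).symm.trans ?_
          refine (sum_subset (subset_univ _) fun j _ hj => ?_).symm
          by_contra hne
          exact hj (mem_biUnion.mpr ⟨i, hi, mem_filter.mpr ⟨mem_univ j, hne⟩⟩)
      _ = ∑ j ∈ s.biUnion t, ∑ i ∈ s, M i j := sum_comm
      _ ≤ ∑ j ∈ s.biUnion t, k :=
          sum_le_sum fun j _ => hM.2 j ▸ sum_le_sum_of_subset (subset_univ s)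
      _ = k * #(s.biUnion t) := by rw [sum_const, smul_eq_mul, mul_comm]
  obtain ⟨f, hf, hft⟩ := (all_card_le_biUnion_card_iff_exists_injective t).mp hall
  exact ⟨ofBijective f hf.bijective_of_finite, fun i => (mem_filter.mp (hft i)).2⟩

lemma exists_eq_sum_permMatrix (hM : HasLineSums M k) :
    ∃ f : Fin k → Perm α, M = ∑ l, (f l).permMatrix ℕ := by
  induction k generalizing M with
  | zero =>
    refine ⟨Fin.elim0, ?_⟩
    ext i j
    simpa using (sum_eq_zero_iff.mp (hM.1 i)) j (mem_univ j)
  | succ k ih =>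
    obtain ⟨σ, hσ⟩ := hM.exists_perm_forall_ne_zero k.succ_ne_zero
    have hsplit : M = (M - σ.permMatrix ℕ) + σ.permMatrix ℕ := by
      ext i j
      by_cases h : σ i = j
      · subst h; simpa using (Nat.sub_add_cancel (Nat.one_le_iff_ne_zero.mpr (hσ i))).symm
      · simp [h]
    obtain ⟨f, hf⟩ := ih ((hsplit ▸ hM).of_add_right (permMatrix σ))
    exact ⟨Fin.cons σ f, by rw [Fin.sum_univ_succ, Fin.cons_zero, add_comm]; simpa [← hf]⟩

lemma exists_eq_permMatrix_add_permMatrix (hM : HasLineSums M 2) :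
    ∃ σ τ : Perm α, M = σ.permMatrix ℕ + τ.permMatrix ℕ :=
  let ⟨f, hf⟩ := hM.exists_eq_sum_permMatrix
  ⟨f 0, f 1, by rw [hf, Fin.sum_univ_two]⟩

end Matrix.HasLineSums

variable [DecidableEq α]

lemma Equiv.Perm.cycleType_eq_of_eq_inv_on_invariant {c d : Perm α} {p : α → Prop}
    [DecidablePred p] (hp : ∀ x, p (c x) ↔ p x) (hd : ∀ x, p x → d x = c⁻¹ x)
    (hd' : ∀ x, ¬p x → d x = c x) : d.cycleType = c.cycleType := by
  have hq : ∀ x, ¬p (c x) ↔ ¬p x := fun x => not_congr (hp x)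
  set c₁ := ofSubtype (c.subtypePerm hp)
  set c₂ := ofSubtype (c.subtypePerm (p := fun x => ¬p x) hq)
  have hc₁ : ∀ x, ¬p x → c₁ x = x := fun x => ofSubtype_subtypePerm_of_not_mem hp
  have hc₂ : ∀ x, p x → c₂ x = x := fun x hx =>
    ofSubtype_subtypePerm_of_not_mem hq (not_not_intro hx)
  have hdisj : Disjoint c₁ c₂ := fun x => by
    by_cases hx : p x
    · exact Or.inr (hc₂ x hx)
    · exact Or.inl (hc₁ x hx)
  have hc : c = c₁ * c₂ := by
    ext x
    by_cases hx : p x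
    · rw [mul_apply, hc₂ x hx, ofSubtype_subtypePerm_of_mem hp hx]
    · rw [mul_apply, ofSubtype_subtypePerm_of_mem (p := fun x => ¬p x) hq hx,
        hc₁ _ ((hq x).mpr hx)]
  have hd₁ : d = c₁⁻¹ * c₂ := by
    ext x
    by_cases hx : p x
    · rw [mul_apply, hc₂ x hx, hd x hx, ← map_inv, inv_subtypePerm,
        ofSubtype_subtypePerm_of_mem _ hx]
    · rw [mul_apply, ofSubtype_subtypePerm_of_mem (p := fun x => ¬p x) hq hx, hd' x hx,
        eq_comm, inv_eq_iff_eq, hc₁ _ ((hq x).mpr hx)]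
  rw [hd₁, hc, hdisj.inv_left.cycleType_mul, cycleType_inv, hdisj.cycleType_mul]

lemma Equiv.Perm.partition_inv (σ : Perm α) : σ⁻¹.partition = σ.partition :=
  partition_eq_of_isConj.mp (isConj_iff_cycleType_eq.mpr (cycleType_inv σ))

lemma Nat.Partition.eq_of_filter_two_le_eq {n : ℕ} {π π' : n.Partition}
    (h : π.parts.filter (2 ≤ ·) = π'.parts.filter (2 ≤ ·)) : π = π' := by
  have hsmall : ∀ π : n.Partition,
      π.parts.filter (¬2 ≤ ·) = .replicate (n - (π.parts.filter (2 ≤ ·)).sum) 1 := by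
    intro π
    have hones : ∀ a ∈ π.parts.filter (¬2 ≤ ·), a = 1 := fun a ha => by
      have := π.parts_pos (Multiset.mem_of_mem_filter ha)
      have := (Multiset.mem_filter.mp ha).2
      omega
    have hsum := congrArg Multiset.sum (Multiset.filter_add_not (2 ≤ ·) π.parts)
    rw [Multiset.eq_replicate_card.mpr hones, Multiset.sum_add, Multiset.sum_replicate,
      smul_eq_mul, mul_one, π.parts_sum] at hsum
    rw [Multiset.eq_replicate_card.mpr hones]
    congr 1
    omega
  ext1
  rw [← Multiset.filter_add_not (2 ≤ ·) π.parts, ← Multiset.filter_add_not (2 ≤ ·) π'.parts,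
    hsmall π, hsmall π', h]

lemma Equiv.Perm.partition_surjective :
    Function.Surjective (partition : Perm α → (Fintype.card α).Partition) := by
  intro π
  have hsum := congrArg Multiset.sum (Multiset.filter_add_not (2 ≤ ·) π.parts)
  rw [Multiset.sum_add, π.parts_sum] at hsum
  obtain ⟨g, hg⟩ := (exists_with_cycleType_iff α).mpr
    ⟨Nat.le.intro hsum, fun a ha => (Multiset.mem_filter.mp ha).2⟩
  exact ⟨g, Nat.Partition.eq_of_filter_two_le_eq (by rw [filter_parts_partition_eq_cycleType, hg])⟩

lemma Equiv.Perm.isConj_inv_mul_of_permMatrix_add_eq {σ τ σ' τ' : Perm α}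
    (h : σ.permMatrix ℕ + τ.permMatrix ℕ = σ'.permMatrix ℕ + τ'.permMatrix ℕ) :
    IsConj (σ'⁻¹ * τ') (σ⁻¹ * τ) := by
  have hrow : ∀ x, σ x = σ' x ∧ τ x = τ' x ∨ σ x = τ' x ∧ τ x = σ' x := fun x => by
    have hx : (Pi.single (σ x) 1 + Pi.single (τ x) 1 : α → ℕ) =
        Pi.single (σ' x) 1 + Pi.single (τ' x) 1 := by
      simp only [← PEquiv.toMatrix_toPEquiv_apply]
      exact congrFun h x
    simpa using (Pi.single_add_single_eq_single_add_single one_ne_zero one_ne_zero).mp hx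
  have hswap : ∀ x, σ' x ≠ σ x → σ' x = τ x ∧ τ' x = σ x := fun x hx => by
    rcases hrow x with h | h
    · exact absurd h.1.symm hx
    · exact ⟨h.2.symm, h.1.symm⟩
  have hkeep : ∀ x, σ' x = σ x → τ' x = τ x := fun x hx => by
    rcases hrow x with h | h
    · exact h.2.symm
    · rw [← h.1, ← hx, h.2]
  set c := σ⁻¹ * τ
  have hσc : ∀ x, σ (c x) = τ x := fun x => eq_inv_iff_eq.mp rfl
  have hinv : ∀ x, σ' (c x) ≠ σ (c x) ↔ σ' x ≠ σ x := fun x => by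
    constructor
    · intro hy hx
      have hcx : c x = x := τ'.injective <| by rw [(hswap _ hy).2, hσc, hkeep x hx]
      exact hy (by rw [hcx]; exact hx)
    · intro hx hy
      have hcx : c x = x := σ'.injective <| by rw [hy, hσc, (hswap x hx).1]
      exact hx (by rw [← hcx]; exact hy)
  refine isConj_iff_cycleType_eq.mpr <| cycleType_eq_of_eq_inv_on_invariant
    (p := fun x => σ' x ≠ σ x) hinv (fun x hx => ?_) fun x hx => ?_
  · have hz : c (c⁻¹ x) = x := eq_inv_iff_eq.mp rfl
    have hpz : σ' (c⁻¹ x) ≠ σ (c⁻¹ x) := (hinv _).mp (by rwa [hz])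
    rw [mul_apply, inv_eq_iff_eq, (hswap x hx).2, (hswap _ hpz).1, ← hσc, hz]
  · have hpy : ¬σ' (c x) ≠ σ (c x) := by rwa [hinv]
    rw [mul_apply, inv_eq_iff_eq, hkeep x (not_not.mp hx), not_not.mp hpy, hσc]

namespace Matrix.HasLineSums

variable {M : Matrix α α ℕ}

/-- The cycles of `σ⁻¹ * τ` for a decomposition `M = P σ + P τ` correspond to the connected
components of the bipartite multigraph of `M`. -/
noncomputable def cyclePartition (hM : HasLineSums M 2) : (Fintype.card α).Partition :=
  (hM.exists_eq_permMatrix_add_permMatrix.choose⁻¹ *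
    hM.exists_eq_permMatrix_add_permMatrix.choose_spec.choose).partition

lemma cyclePartition_eq (hM : HasLineSums M 2) {σ τ : Perm α}
    (h : M = σ.permMatrix ℕ + τ.permMatrix ℕ) : hM.cyclePartition = (σ⁻¹ * τ).partition :=
  partition_eq_of_isConj.mp <| isConj_inv_mul_of_permMatrix_add_eq <|
    h.symm.trans hM.exists_eq_permMatrix_add_permMatrix.choose_spec.choose_spec

lemma cyclePartition_submatrix (hM : HasLineSums M 2) (ρ₁ ρ₂ : Perm α)
    (hM' : HasLineSums (M.submatrix ρ₁ ρ₂) 2) : hM'.cyclePartition = hM.cyclePartition := by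
  obtain ⟨σ, τ, rfl⟩ := hM.exists_eq_permMatrix_add_permMatrix
  rw [hM.cyclePartition_eq rfl, hM'.cyclePartition_eq (σ := ρ₂⁻¹ * σ * ρ₁) (τ := ρ₂⁻¹ * τ * ρ₁)
    (by simp only [submatrix_add, Pi.add_apply, permMatrix_submatrix])]
  exact partition_eq_of_isConj.mp (isConj_iff.mpr ⟨ρ₁, by group⟩)

lemma cyclePartition_transpose (hM : HasLineSums M 2) (hM' : HasLineSums Mᵀ 2) :
    hM'.cyclePartition = hM.cyclePartition := by
  obtain ⟨σ, τ, rfl⟩ := hM.exists_eq_permMatrix_add_permMatrix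
  rw [hM.cyclePartition_eq rfl, hM'.cyclePartition_eq (by
    rw [transpose_add, transpose_permMatrix, transpose_permMatrix]), ← partition_inv (σ⁻¹ * τ)]
  exact partition_eq_of_isConj.mp (isConj_iff.mpr ⟨τ⁻¹, by group⟩)

end Matrix.HasLineSums

namespace Matrix.Congruent

variable {A B : Matrix α α ℕ}

lemma cyclePartition_eq (h : Congruent A B) (hA : HasLineSums A 2) (hB : HasLineSums B 2) :
    hA.cyclePartition = hB.cyclePartition := by
  obtain ⟨ρ₁, ρ₂, h | h⟩ := h
  · obtain rfl : A.submatrix ρ₁ ρ₂ = B := Matrix.ext h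
    exact (hA.cyclePartition_submatrix ρ₁ ρ₂ hB).symm
  · obtain rfl : Aᵀ.submatrix ρ₁ ρ₂ = B := Matrix.ext h
    rw [hA.transpose.cyclePartition_submatrix ρ₁ ρ₂ hB, hA.cyclePartition_transpose]

lemma of_cyclePartition_eq (hA : HasLineSums A 2) (hB : HasLineSums B 2)
    (h : hA.cyclePartition = hB.cyclePartition) : Congruent A B := by
  obtain ⟨σ, τ, rfl⟩ := hA.exists_eq_permMatrix_add_permMatrix
  obtain ⟨σ', τ', rfl⟩ := hB.exists_eq_permMatrix_add_permMatrix
  rw [hA.cyclePartition_eq rfl, hB.cyclePartition_eq rfl, ← partition_eq_of_isConj,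
    isConj_iff] at h
  obtain ⟨θ, hθ⟩ := h
  have hτ : (σ * θ⁻¹ * σ'⁻¹)⁻¹ * τ * θ⁻¹ = τ' := by
    rw [show (σ * θ⁻¹ * σ'⁻¹)⁻¹ * τ * θ⁻¹ = σ' * (θ * (σ⁻¹ * τ) * θ⁻¹) by group, hθ]
    group
  have hσ : (σ * θ⁻¹ * σ'⁻¹)⁻¹ * σ * θ⁻¹ = σ' := by group
  have hsub : (σ.permMatrix ℕ + τ.permMatrix ℕ).submatrix ⇑θ⁻¹ ⇑(σ * θ⁻¹ * σ'⁻¹) =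
      σ'.permMatrix ℕ + τ'.permMatrix ℕ := by
    simp only [submatrix_add, Pi.add_apply, permMatrix_submatrix, hσ, hτ]
  exact ⟨θ⁻¹, _, Or.inl (Matrix.ext_iff.mpr hsub)⟩

end Matrix.Congruent

theorem Matrix.card_quot_congruent (α : Type*) [Fintype α] [DecidableEq α] :
    Nat.card (Quot fun A B : {M : Matrix α α ℕ // HasLineSums M 2} => Congruent A.1 B.1) =
      Fintype.card (Fintype.card α).Partition := by
  set κ : (Quot fun A B : {M : Matrix α α ℕ // HasLineSums M 2} => Congruent A.1 B.1) →
      (Fintype.card α).Partition :=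
    Quot.lift (fun A => A.2.cyclePartition) fun A B h => h.cyclePartition_eq A.2 B.2
  have hinj : Function.Injective κ := by
    rintro ⟨A⟩ ⟨B⟩ h
    exact Quot.sound (Congruent.of_cyclePartition_eq A.2 B.2 h)
  have hsurj : Function.Surjective κ := by
    intro π
    obtain ⟨g, rfl⟩ := partition_surjective π
    have hA := (HasLineSums.permMatrix 1).add (HasLineSums.permMatrix g)
    exact ⟨Quot.mk _ ⟨_, hA⟩, (hA.cyclePartition_eq rfl).trans (by rw [inv_one, one_mul])⟩
  rw [Nat.card_eq_of_bijective κ ⟨hinj, hsurj⟩, Nat.card_eq_fintype_card]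

theorem stmt_15_general (o : ℕ) :
    Nat.card (Quot (fun (A B : {M : Matrix (Fin (2 * o)) (Fin (2 * o)) ℕ //
        (∀ i, ∑ j, M i j = 2) ∧ (∀ j, ∑ i, M i j = 2)}) =>
      ∃ (ρ₁ ρ₂ : Equiv.Perm (Fin (2 * o))),
        (∀ i j, A.1 (ρ₁ i) (ρ₂ j) = B.1 i j) ∨
        (∀ i j, A.1 (ρ₂ j) (ρ₁ i) = B.1 i j)))
      = Fintype.card (Nat.Partition (2 * o)) := by
  have := card_quot_congruent (Fin (2 * o))
  rwa [Fintype.card_fin] at this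

theorem stmt_15 (o : ℕ) (ho : 1 ≤ o) :
    Nat.card (Quot (fun (A B : {M : Matrix (Fin (2 * o)) (Fin (2 * o)) ℕ //
        (∀ i, ∑ j, M i j = 2) ∧ (∀ j, ∑ i, M i j = 2)}) =>
      ∃ (ρ₁ ρ₂ : Equiv.Perm (Fin (2 * o))),
        (∀ i j, A.1 (ρ₁ i) (ρ₂ j) = B.1 i j) ∨
        (∀ i j, A.1 (ρ₂ j) (ρ₁ i) = B.1 i j)))
      = Fintype.card (Nat.Partition (2 * o)) :=
  stmt_15_general o
end
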